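/- arXiv:1310.2847 — 3 statements merged into one kernel-verified Lean document; each statement's English description precedes it below -/
import Mathlib

section
/- Let ω be a nonzero complex number with principal argument θ = arg ω satisfying 0 < θ < π (equivalently, Im ω > 0). Define ĉ(θ) = 1 if π/4 ≤ θ ≤ 3π/4 and ĉ(θ) = |sin(2θ)| otherwise. Then for all real numbers A ≥ 0 and B ≥ 0 one has ĉ(θ)·A ≤ |A − ω²·B|, where A and B are regarded as complex numbers via the canonical embedding of ℝ into ℂ and |·| denotes the complex modulus. -/
/-!
Write `ω² = ‖ω‖² e^{2iθ}`. If `cos 2θ ≤ 0`, then `ω² B` lies in the closed left half-plane, so the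
real part of `A - ω² B` is already at least `A`. In general, `A - ω² B` is at least as long as the
distance from `A` to the line `ℝ e^{2iθ}`, which is `|A sin 2θ|`.
-/

open Real

/-- The θ-dependent stability constant ĉ(θ): 1 on [π/4, 3π/4], |sin 2θ| otherwise. -/
noncomputable def chat (θ : ℝ) : ℝ :=
  if π/4 ≤ θ ∧ θ ≤ 3*π/4 then 1 else |Real.sin (2*θ)|

open ComplexConjugate

namespace Complex

theorem le_norm_ofReal_sub_of_re_nonpos {z : ℂ} (hz : z.re ≤ 0) (x : ℝ) : x ≤ ‖(x : ℂ) - z‖ :=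
  calc x ≤ ((x : ℂ) - z).re := by simp only [sub_re, ofReal_re]; linarith
    _ ≤ ‖(x : ℂ) - z‖ := re_le_norm _

theorem abs_mul_im_le_norm_ofReal_sub_ofReal_mul {u : ℂ} (hu : ‖u‖ = 1) (x t : ℝ) :
    |x * u.im| ≤ ‖(x : ℂ) - t * u‖ :=
  calc |x * u.im| = |((x : ℂ) * conj u - t).im| := by simp
    _ ≤ ‖(x : ℂ) * conj u - t‖ := abs_im_le_norm _
    _ = ‖conj u * ((x : ℂ) - t * u)‖ := by
        rw [mul_sub, mul_left_comm, conj_mul', hu, ofReal_one, one_pow, mul_one, mul_comm]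
    _ = ‖(x : ℂ) - t * u‖ := by rw [norm_mul, norm_conj, hu, one_mul]

theorem sq_eq_ofReal_norm_sq_mul_exp (ω : ℂ) :
    ω ^ 2 = ((‖ω‖ ^ 2 : ℝ) : ℂ) * exp (↑(2 * ω.arg) * I) := by
  conv_lhs => rw [← norm_mul_exp_arg_mul_I ω]
  push_cast
  rw [mul_pow, ← exp_nat_mul]
  ring_nf

end Complex

theorem Real.cos_two_mul_nonpos_of_pi_div_four_le_of_le {θ : ℝ} (h₁ : π / 4 ≤ θ)
    (h₂ : θ ≤ 3 * π / 4) : cos (2 * θ) ≤ 0 :=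
  cos_nonpos_of_pi_div_two_le_of_le (by linarith) (by linarith)

open Complex in
theorem stmt0_general (ω : ℂ) (A B : ℝ) (hB : 0 ≤ B) :
    chat ω.arg * A ≤ ‖(A : ℂ) - ω^2 * (B : ℂ)‖ := by
  have hpolar : ω ^ 2 * B = ((‖ω‖ ^ 2 * B : ℝ) : ℂ) * exp (↑(2 * ω.arg) * I) := by
    rw [sq_eq_ofReal_norm_sq_mul_exp]; push_cast; ring
  unfold chat
  split_ifs with h
  · rw [one_mul]
    refine le_norm_ofReal_sub_of_re_nonpos ?_ A
    rw [hpolar, re_ofReal_mul, exp_ofReal_mul_I_re]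
    exact mul_nonpos_of_nonneg_of_nonpos (by positivity)
      (cos_two_mul_nonpos_of_pi_div_four_le_of_le h.1 h.2)
  · calc |Real.sin (2 * ω.arg)| * A ≤ |A * (exp (↑(2 * ω.arg) * I)).im| := by
          rw [exp_ofReal_mul_I_im, mul_comm, abs_mul A]
          exact mul_le_mul_of_nonneg_right (le_abs_self A) (abs_nonneg _)
      _ ≤ ‖(A : ℂ) - ω ^ 2 * B‖ := by
          rw [hpolar]
          exact abs_mul_im_le_norm_ofReal_sub_ofReal_mul (norm_exp_ofReal_mul_I _) _ _

theorem stmt0 (ω : ℂ) (hω : ω ≠ 0) (hθ₁ : 0 < ω.arg) (hθ₂ : ω.arg < π)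
    (A B : ℝ) (hA : 0 ≤ A) (hB : 0 ≤ B) :
    chat ω.arg * A ≤ ‖(A : ℂ) - ω^2 * (B : ℂ)‖ :=
  stmt0_general ω A B hB
end

section
/- Let X be a complex normed vector space, σ : X → X a map with ‖σ(v)‖ = ‖v‖ for all v ∈ X, let a, p : X × X → ℂ be maps, and let c₀ > 0. Assume that for every v ∈ X the complex numbers a(v, σ(v)) and p(v, σ(v)) are real, with a(v, σ(v)) ≥ c₀·‖v‖² and p(v, σ(v)) ≥ 0. Then for every ω ∈ ℂ with 0 < arg ω < π and every v ∈ X there exists t ∈ X with ‖t‖ = ‖v‖ and ĉ(arg ω)·c₀·‖v‖² ≤ |a(v, t) − ω²·p(v, t)|, where ĉ(θ) := 1 if π/4 ≤ θ ≤ 3π/4 and ĉ(θ) := |sin(2θ)| otherwise. -/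
/-!
Take `t = σ v`, so that `a v t = A` and `p v t = P` are reals with `A ≥ c₀‖v‖²` and `P ≥ 0`,
and `ω² P` lies on the ray of argument `2θ`, `θ = arg ω`. For `θ ∈ [π/4, 3π/4]` that ray lies
in the closed left half-plane, so `Re (A - ω² P) ≥ A`. For every `θ`, the distance from the real
number `A` to the line through `0` of direction `2θ` is `|sin 2θ| |A|`.
-/

open Real

namespace Complex

lemma re_sq_eq_norm_sq_mul_cos_two_mul_arg (ω : ℂ) :
    (ω ^ 2).re = ‖ω‖ ^ 2 * Real.cos (2 * ω.arg) := by
  rw [Real.cos_two_mul', pow_two ω, mul_re, ← norm_mul_cos_arg ω, ← norm_mul_sin_arg ω]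
  ring

lemma im_sq_eq_norm_sq_mul_sin_two_mul_arg (ω : ℂ) :
    (ω ^ 2).im = ‖ω‖ ^ 2 * Real.sin (2 * ω.arg) := by
  rw [Real.sin_two_mul, pow_two ω, mul_im, ← norm_mul_cos_arg ω, ← norm_mul_sin_arg ω]
  ring

variable (A : ℝ) {P : ℝ} (ω : ℂ)

lemma abs_sin_two_mul_arg_mul_le_norm_sub_sq_mul :
    |Real.sin (2 * ω.arg)| * A ≤ ‖(A : ℂ) - ω ^ 2 * P‖ := by
  set z : ℂ := A - ω ^ 2 * P
  set s := Real.sin (2 * ω.arg)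
  set c := Real.cos (2 * ω.arg)
  have hz_re : z.re = A - ‖ω‖ ^ 2 * c * P := by
    simp [z, c, re_sq_eq_norm_sq_mul_cos_two_mul_arg]
  have hz_im : z.im = -(‖ω‖ ^ 2 * s * P) := by
    simp [z, s, im_sq_eq_norm_sq_mul_sin_two_mul_arg]
  have hsc : s ^ 2 + c ^ 2 = 1 := Real.sin_sq_add_cos_sq _
  have hprojection : s * z.re - c * z.im = s * A := by
    rw [hz_re, hz_im]
    ring
  have hsq : (s * A) ^ 2 ≤ ‖z‖ ^ 2 := by
    -- Lagrange's identity: `(s x - c y)² + (c x + s y)² = (s² + c²)(x² + y²)`.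
    rw [Complex.sq_norm, normSq_apply, ← hprojection]
    nlinarith [sq_nonneg (c * z.re + s * z.im)]
  calc |s| * A ≤ |s * A| := by
        rw [abs_mul]; exact mul_le_mul_of_nonneg_left (le_abs_self A) (abs_nonneg s)
    _ ≤ |‖z‖| := sq_le_sq.1 hsq
    _ = ‖z‖ := abs_norm z

lemma le_re_sub_sq_mul (hP : 0 ≤ P) (hθ₁ : π / 4 ≤ ω.arg) (hθ₂ : ω.arg ≤ 3 * π / 4) :
    A ≤ ((A : ℂ) - ω ^ 2 * P).re := by
  have hcos : Real.cos (2 * ω.arg) ≤ 0 :=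
    Real.cos_nonpos_of_pi_div_two_le_of_le (by linarith) (by linarith)
  have : 0 ≤ ‖ω‖ ^ 2 * -Real.cos (2 * ω.arg) * P := by
    have := neg_nonneg.2 hcos
    positivity
  simp only [sub_re, ofReal_re, mul_re, ofReal_im, mul_zero, sub_zero,
    re_sq_eq_norm_sq_mul_cos_two_mul_arg]
  linarith

end Complex

lemma chat_nonneg (θ : ℝ) : 0 ≤ chat θ := by
  unfold chat
  split_ifs <;> positivity

lemma chat_arg_mul_le_norm_sub_sq_mul (A : ℝ) (ω : ℂ) {P : ℝ} (hP : 0 ≤ P) :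
    chat ω.arg * A ≤ ‖(A : ℂ) - ω ^ 2 * P‖ := by
  unfold chat
  split_ifs with hθ
  · rw [one_mul]
    exact (Complex.le_re_sub_sq_mul A ω hP hθ.1 hθ.2).trans (Complex.re_le_norm _)
  · exact Complex.abs_sin_two_mul_arg_mul_le_norm_sub_sq_mul A ω

theorem stmt6_general {X : Type*} [NormedAddCommGroup X] [NormedSpace ℂ X]
    (σ : X → X) (hσ : ∀ v, ‖σ v‖ = ‖v‖)
    (a p : X → X → ℂ) (c₀ : ℝ)
    (ha_im : ∀ v, (a v (σ v)).im = 0)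
    (ha_re : ∀ v, c₀ * ‖v‖^2 ≤ (a v (σ v)).re)
    (hp_im : ∀ v, (p v (σ v)).im = 0)
    (hp_re : ∀ v, 0 ≤ (p v (σ v)).re) :
    ∀ ω : ℂ, 0 < ω.arg → ω.arg < π → ∀ v : X,
      ∃ t : X, ‖t‖ = ‖v‖ ∧
        chat ω.arg * c₀ * ‖v‖^2 ≤ ‖a v t - ω^2 * p v t‖ := by
  intro ω _ _ v
  refine ⟨σ v, hσ v, ?_⟩
  have ha : a v (σ v) = ((a v (σ v)).re : ℂ) := Complex.ext (by simp) (by simp [ha_im v])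
  have hp : p v (σ v) = ((p v (σ v)).re : ℂ) := Complex.ext (by simp) (by simp [hp_im v])
  rw [ha, hp, mul_assoc]
  exact (mul_le_mul_of_nonneg_left (ha_re v) (chat_nonneg _)).trans
    (chat_arg_mul_le_norm_sub_sq_mul _ ω (hp_re v))

theorem stmt6 {X : Type*} [NormedAddCommGroup X] [NormedSpace ℂ X]
    (σ : X → X) (hσ : ∀ v, ‖σ v‖ = ‖v‖)
    (a p : X → X → ℂ) (c₀ : ℝ) (hc₀ : 0 < c₀)
    (ha_im : ∀ v, (a v (σ v)).im = 0)
    (ha_re : ∀ v, c₀ * ‖v‖^2 ≤ (a v (σ v)).re)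
    (hp_im : ∀ v, (p v (σ v)).im = 0)
    (hp_re : ∀ v, 0 ≤ (p v (σ v)).re) :
    ∀ ω : ℂ, 0 < ω.arg → ω.arg < π → ∀ v : X,
      ∃ t : X, ‖t‖ = ‖v‖ ∧
        chat ω.arg * c₀ * ‖v‖^2 ≤ ‖a v t - ω^2 * p v t‖ :=
  stmt6_general σ hσ a p c₀ ha_im ha_re hp_im hp_re
end

section
/- Let X be a real normed vector space, V ⊆ X a linear subspace, and a, p : X × X → ℝ bilinear forms. Assume constants C_cont > 0 and c_coer > 0 with |a(s,t)| ≤ C_cont·‖s‖·‖t‖ for all s,t ∈ X and a(t,t) ≥ c_coer·‖t‖² for all t ∈ X. Let ω ∈ ℝ, u ∈ X, u_h ∈ V, and F : V → ℝ linear with a(u_h,z) − ω²·p(u_h,z) = F(z) for all z ∈ V. Assume a consistency bound M₁ ≥ 0 with |F(z) − a(u,z) + ω²·p(u,z)| ≤ M₁·‖z‖ for all z ∈ V, and a duality bound: there exist α ≥ 0 and β ≥ 0 with |p(u − u_h, z)| ≤ (α·‖u − u_h‖ + β)·‖z‖ for all z ∈ V. If moreover ω²·α ≤ c_coer/2, then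 for every v ∈ V: ‖u − u_h‖ ≤ 2·(1 + C_cont/c_coer)·‖u − v‖ + (2/c_coer)·(M₁ + ω²·β). -/
/-!
Céa's argument with a perturbed Galerkin orthogonality. Testing the error equation with
`v - uh ∈ V` and using coercivity gives `c ‖u - uh‖ ≤ (c + C) ‖u - v‖ + M₁ + ω² (α ‖u - uh‖ + β)`;
the smallness condition `ω² α ≤ c / 2` lets the `‖u - uh‖` term on the right be absorbed into
the left-hand side.
-/

lemma mul_le_of_mul_sq_le_mul {c x B : ℝ} (hB : 0 ≤ B) (hx : 0 ≤ x)
    (h : c * x ^ 2 ≤ B * x) : c * x ≤ B := by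
  rcases hx.eq_or_lt with rfl | hx
  · simpa using hB
  · exact le_of_mul_le_mul_right (by nlinarith) hx

section Galerkin

variable {X : Type*} [NormedAddCommGroup X] [NormedSpace ℝ X]
  {V : Submodule ℝ X} {a : X →ₗ[ℝ] X →ₗ[ℝ] ℝ}

/-- Céa's lemma when Galerkin orthogonality only holds up to `K ‖z‖`. -/
lemma coercive_mul_norm_sub_le {C c K : ℝ} (hC : 0 ≤ C) (hc : 0 ≤ c) (hK : 0 ≤ K)
    (ha_bdd : ∀ s t : X, |a s t| ≤ C * ‖s‖ * ‖t‖) (ha_coer : ∀ t : X, c * ‖t‖ ^ 2 ≤ a t t)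
    {u uh : X} (huh : uh ∈ V) (horth : ∀ z : V, a (u - uh) z ≤ K * ‖(z : X)‖)
    {v : X} (hv : v ∈ V) :
    c * ‖u - uh‖ ≤ (c + C) * ‖u - v‖ + K := by
  set w := v - uh
  have hsplit : a w w = a (v - u) w + a (u - uh) w := by
    rw [← LinearMap.add_apply, ← map_add, sub_add_sub_cancel]
  have hcont : a (v - u) w ≤ C * ‖u - v‖ * ‖w‖ := by
    rw [← norm_neg (u - v), neg_sub]
    exact (le_abs_self _).trans (ha_bdd _ _)
  have hw : c * ‖w‖ ≤ C * ‖u - v‖ + K := by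
    refine mul_le_of_mul_sq_le_mul (by positivity) (norm_nonneg w) ?_
    have := horth ⟨w, V.sub_mem hv huh⟩
    linarith [ha_coer w]
  have htri : ‖u - uh‖ ≤ ‖u - v‖ + ‖w‖ := norm_sub_le_norm_sub_add_norm_sub u v uh
  nlinarith

lemma galerkin_error_eq {p : X →ₗ[ℝ] X →ₗ[ℝ] ℝ} {ω : ℝ} {u uh : X} {F : V →ₗ[ℝ] ℝ}
    (hdisc : ∀ z : V, a uh z - ω ^ 2 * p uh z = F z) (z : V) :
    a (u - uh) z = ω ^ 2 * p (u - uh) z - (F z - a u z + ω ^ 2 * p u z) := by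
  simp only [map_sub, LinearMap.sub_apply]
  linarith [hdisc z]

end Galerkin

theorem stmt8 {X : Type*} [NormedAddCommGroup X] [NormedSpace ℝ X]
    (V : Submodule ℝ X) (a p : X →ₗ[ℝ] X →ₗ[ℝ] ℝ)
    (Ccont ccoer : ℝ) (hCcont : 0 < Ccont) (hccoer : 0 < ccoer)
    (ha_bdd : ∀ s t : X, |a s t| ≤ Ccont * ‖s‖ * ‖t‖)
    (ha_coer : ∀ t : X, ccoer * ‖t‖^2 ≤ a t t)
    (ω : ℝ) (u uh : X) (huh : uh ∈ V)
    (F : V →ₗ[ℝ] ℝ)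
    (hdisc : ∀ z : V, a uh z - ω^2 * p uh z = F z)
    (M₁ : ℝ) (hM₁ : 0 ≤ M₁)
    (hcons : ∀ z : V, |F z - a u z + ω^2 * p u z| ≤ M₁ * ‖(z : X)‖)
    (α β : ℝ) (hα : 0 ≤ α) (hβ : 0 ≤ β)
    (hdual : ∀ z : V, |p (u - uh) z| ≤ (α * ‖u - uh‖ + β) * ‖(z : X)‖)
    (hsmall : ω^2 * α ≤ ccoer / 2) :
    ∀ v ∈ V, ‖u - uh‖ ≤
      2 * (1 + Ccont / ccoer) * ‖u - v‖ + (2 / ccoer) * (M₁ + ω^2 * β) := by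
  intro v hv
  set K := M₁ + ω ^ 2 * (α * ‖u - uh‖ + β)
  have horth : ∀ z : V, a (u - uh) z ≤ K * ‖(z : X)‖ := fun z => by
    have hp := mul_le_mul_of_nonneg_left ((le_abs_self _).trans (hdual z)) (sq_nonneg ω)
    rw [galerkin_error_eq hdisc z]
    linarith [neg_abs_le (F z - a u z + ω ^ 2 * p u z), hcons z]
  have hcea := coercive_mul_norm_sub_le hCcont.le hccoer.le (by positivity) ha_bdd ha_coer huh
    horth hv
  have habsorb : ω ^ 2 * α * ‖u - uh‖ ≤ ccoer / 2 * ‖u - uh‖ :=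
    mul_le_mul_of_nonneg_right hsmall (norm_nonneg _)
  rw [← mul_le_mul_iff_of_pos_left hccoer]
  have hrhs : ccoer * (2 * (1 + Ccont / ccoer) * ‖u - v‖ + 2 / ccoer * (M₁ + ω ^ 2 * β))
      = 2 * ((ccoer + Ccont) * ‖u - v‖ + (M₁ + ω ^ 2 * β)) := by
    field_simp
  rw [hrhs]
  linarith
end
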